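/- Let d ≥ 1, M ≥ 2, let p, p_1, …, p_M ∈ ℝ^d with p ≠ p_m for all m, and let c > 0. Define τ_m = ‖p − p_m‖₂/c, the delay-gradient vectors g_i ∈ ℝ^M by [g_i]_m = (p_i − [p_m]_i)/(c‖p − p_m‖₂), the centering projection P = I_M − (1/M)𝟙𝟙ᵀ, the geometry matrix G ∈ ℝ^{d×d} by G_{ij} = (P g_i)ᵀ(P g_j), and for f ∈ ℝ the steering vector v(f) ∈ ℂ^M with [v(f)]_m = exp(−2πℹ f τ_m). Fix 0 < f_L, S_L > 0, N₀ > 0, and a water level λ with 0 < λ < S_L + N₀. Set B_L = 1 − λ/(S_L + N₀), S_{w,L} = B_L² N₀ + λ B_L, γ_L = S_L B_L²/S_{w,L}, w_L = 2Mγ_L²/(1 + Mγ_L), and for |f| ≤ f_L let S(f) = S_L B_L² v(f)v(f)* + S_{w,L} I_M and S'_i(f) = 2πℹ f S_L B_L² (v(f)v(f)* D_i − D_i v(f)v(f)*), where D_i = diag(g_i). Then for all 1 ≤ i, j ≤ d: (1/2)∫_{−f_L}^{f_L} tr(S(f)^{-1} S'_i(f) S(f)^{-1} S'_j(f)) df =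 (4π²/3)·f_L³·w_L·G_{ij}. -/

import Mathlib

/-!
Write `V = v v*`. Since `|v_m| = 1`, `V² = M V`, and the low-band spectra are `S = aV + bI`,
`S'_i = κ ⁅V, D_i⁆` with `a = S_L B_L²`, `b = S_{w,L}`, `κ = 2πℹ f a`. From
`V⁅V,D⁆ + ⁅V,D⁆V = ⁅V², D⁆ = M⁅V,D⁆` and `V⁅V,D⁆V = 0` one gets `S⁅V,D⁆S = b(b + aM)⁅V,D⁆`,
hence `S⁻¹S'_iS⁻¹ = κ/(b(b + aM)) ⁅V,D_i⁆`. For diagonal `D_i` the phases of `v` drop out of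
`tr(⁅V,D_i⁆⁅V,D_j⁆) = 2((Σ g_i)(Σ g_j) − M Σ g_i g_j) = −2M G_ij`, so the integrand is
`−κ² · 2M G_ij / (b(b + aM)) = 4π² w_L G_ij f²`, because `w_L = 2Ma²/(b(b + aM))`.
Integrating `f²` over `[−f_L, f_L]` gives the claim.
-/

open Matrix Real

section Commutator

variable {n K : Type*} [Fintype n] [Field K] {V : Matrix n n K} {μ : K}

theorem mul_lie_add_lie_mul (hV : V * V = μ • V) (D : Matrix n n K) :
    V * ⁅V, D⁆ + ⁅V, D⁆ * V = μ • ⁅V, D⁆ := by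
  simp only [Ring.lie_def, mul_sub, sub_mul, ← Matrix.mul_assoc, hV, smul_sub, Matrix.smul_mul]
  rw [Matrix.mul_assoc D V V, hV, Matrix.mul_smul]
  abel

theorem mul_lie_mul_self (hV : V * V = μ • V) (D : Matrix n n K) : V * ⁅V, D⁆ * V = 0 := by
  simp only [Ring.lie_def, mul_sub, sub_mul, ← Matrix.mul_assoc, hV, Matrix.smul_mul]
  rw [Matrix.mul_assoc (V * D) V V, hV, Matrix.mul_smul, sub_self]

theorem trace_lie_mul_lie (hV : V * V = μ • V) (D E : Matrix n n K) :
    trace (⁅V, D⁆ * ⁅V, E⁆) = 2 * trace (V * D * V * E) - μ * trace (V * (D * E + E * D)) := by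
  have hVD : trace (V * D * (E * V)) = μ * trace (V * D * E) := by
    rw [← Matrix.mul_assoc, trace_mul_comm, ← Matrix.mul_assoc, ← Matrix.mul_assoc, hV,
      Matrix.smul_mul, Matrix.smul_mul, trace_smul, smul_eq_mul]
  have hDV : trace (D * V * (V * E)) = μ * trace (V * E * D) := by
    rw [← Matrix.mul_assoc, Matrix.mul_assoc D V V, hV, Matrix.mul_smul, Matrix.smul_mul,
      trace_smul, smul_eq_mul, trace_mul_cycle V E D]
  have hDVD : trace (D * V * (E * V)) = trace (V * D * V * E) := by
    rw [← Matrix.mul_assoc, trace_mul_comm, ← Matrix.mul_assoc, ← Matrix.mul_assoc]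
  simp only [Ring.lie_def, mul_sub, sub_mul, trace_sub, hVD, hDV, hDVD, Matrix.mul_add, trace_add]
  rw [← Matrix.mul_assoc (V * D) V E, ← Matrix.mul_assoc V D E, ← Matrix.mul_assoc V E D]
  ring

variable [DecidableEq n]

theorem smul_add_smul_one_mul_eq_one (hV : V * V = μ • V) {a b : K} (hb : b ≠ 0)
    (hab : b + a * μ ≠ 0) :
    (a • V + b • 1) * (b⁻¹ • (1 - (a / (b + a * μ)) • V)) = 1 := by
  simp only [add_mul, mul_sub, Matrix.smul_mul, Matrix.mul_smul, mul_one, one_mul, hV,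
    smul_sub, smul_smul]
  match_scalars <;> field_simp; ring

theorem smul_add_smul_one_mul_lie_mul (hV : V * V = μ • V) (a b : K) (D : Matrix n n K) :
    (a • V + b • 1) * ⁅V, D⁆ * (a • V + b • 1) = (b * (b + a * μ)) • ⁅V, D⁆ :=
  calc (a • V + b • 1) * ⁅V, D⁆ * (a • V + b • 1)
      = (a * a) • (V * ⁅V, D⁆ * V) + (a * b) • (V * ⁅V, D⁆ + ⁅V, D⁆ * V) + (b * b) • ⁅V, D⁆ := by
        simp only [add_mul, mul_add, Matrix.smul_mul, Matrix.mul_smul, mul_one, one_mul,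
          smul_add, smul_smul, Matrix.mul_assoc]
        match_scalars <;> ring
    _ = (b * (b + a * μ)) • ⁅V, D⁆ := by
        rw [mul_lie_mul_self hV, mul_lie_add_lie_mul hV, smul_zero, zero_add, smul_smul,
          ← add_smul]
        ring_nf

theorem inv_mul_lie_mul_inv (hV : V * V = μ • V) {a b : K} (hb : b ≠ 0) (hab : b + a * μ ≠ 0)
    (D : Matrix n n K) :
    (a • V + b • 1)⁻¹ * ⁅V, D⁆ * (a • V + b • 1)⁻¹ = (b * (b + a * μ))⁻¹ • ⁅V, D⁆ := by
  set S := a • V + b • 1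
  have hS : IsUnit S.det := isUnit_det_of_right_inverse (smul_add_smul_one_mul_eq_one hV hb hab)
  calc S⁻¹ * ⁅V, D⁆ * S⁻¹
      = (b * (b + a * μ))⁻¹ • (S⁻¹ * (S * ⁅V, D⁆ * S) * S⁻¹) := by
        rw [smul_add_smul_one_mul_lie_mul hV, Matrix.mul_smul, Matrix.smul_mul, smul_smul,
          inv_mul_cancel₀ (mul_ne_zero hb hab), one_smul]
    _ = (b * (b + a * μ))⁻¹ • ⁅V, D⁆ := by
        rw [← Matrix.mul_assoc, ← Matrix.mul_assoc, nonsing_inv_mul _ hS, Matrix.one_mul,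
          Matrix.mul_assoc, mul_nonsing_inv _ hS, Matrix.mul_one]

end Commutator

section RankOne

variable {n K : Type*} [Fintype n] [Field K] {u w : n → K}

theorem vecMulVec_mul_self_of_mul_eq_one (hu : ∀ m, w m * u m = 1) :
    vecMulVec u w * vecMulVec u w = (Fintype.card n : K) • vecMulVec u w := by
  rw [vecMulVec_mul_vecMulVec, vecMulVec_smul]
  simp [dotProduct, hu]

variable [DecidableEq n]

theorem trace_vecMulVec_mul_diagonal (hu : ∀ m, w m * u m = 1) (g : n → K) :
    trace (vecMulVec u w * diagonal g) = ∑ m, g m := by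
  simp only [vecMulVec_mul, trace_vecMulVec, vecMul_diagonal, dotProduct]
  exact Finset.sum_congr rfl fun m _ => by linear_combination g m * hu m

theorem vecMulVec_mul_diagonal_mul_vecMulVec (hu : ∀ m, w m * u m = 1) (g : n → K) :
    vecMulVec u w * diagonal g * vecMulVec u w = (∑ m, g m) • vecMulVec u w := by
  rw [Matrix.mul_assoc, mul_vecMulVec, vecMulVec_mul_vecMulVec, vecMulVec_smul]
  congr 1
  simp only [mulVec_diagonal, dotProduct]
  exact Finset.sum_congr rfl fun m _ => by linear_combination g m * hu m

theorem trace_lie_diagonal_mul_lie_diagonal (hu : ∀ m, w m * u m = 1) (g h : n → K) :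
    trace (⁅vecMulVec u w, diagonal g⁆ * ⁅vecMulVec u w, diagonal h⁆)
      = 2 * ((∑ m, g m) * (∑ m, h m) - Fintype.card n * ∑ m, g m * h m) := by
  rw [trace_lie_mul_lie (vecMulVec_mul_self_of_mul_eq_one hu),
    vecMulVec_mul_diagonal_mul_vecMulVec hu, Matrix.smul_mul, trace_smul, smul_eq_mul,
    diagonal_mul_diagonal, diagonal_mul_diagonal, Matrix.mul_add, trace_add]
  simp only [trace_vecMulVec_mul_diagonal hu, mul_comm (h _)]
  ring

theorem trace_inv_mul_smul_lie_diagonal (hu : ∀ m, w m * u m = 1) {a b : K} (hb : b ≠ 0)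
    (hab : b + a * Fintype.card n ≠ 0) (κ κ' : K) (g h : n → K) :
    trace ((a • vecMulVec u w + b • 1)⁻¹ * (κ • ⁅vecMulVec u w, diagonal g⁆) *
        (a • vecMulVec u w + b • 1)⁻¹ * (κ' • ⁅vecMulVec u w, diagonal h⁆))
      = κ * κ' * (b * (b + a * Fintype.card n))⁻¹ *
          (2 * ((∑ m, g m) * (∑ m, h m) - Fintype.card n * ∑ m, g m * h m)) := by
  simp only [Matrix.mul_smul, Matrix.smul_mul]
  rw [inv_mul_lie_mul_inv (vecMulVec_mul_self_of_mul_eq_one hu) hb hab, Matrix.smul_mul,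
    trace_smul, trace_smul, trace_smul, trace_lie_diagonal_mul_lie_diagonal hu]
  simp only [smul_eq_mul]
  ring

end RankOne

section Centering

variable (n K : Type*) [Fintype n] [DecidableEq n] [Field K]

def centeringMatrix : Matrix n n K :=
  1 - (Fintype.card n : K)⁻¹ • vecMulVec 1 1

variable {n K}

theorem centeringMatrix_mulVec (x : n → K) :
    centeringMatrix n K *ᵥ x = x - ((Fintype.card n : K)⁻¹ * ∑ m, x m) • 1 := by
  rw [centeringMatrix, sub_mulVec, one_mulVec, Matrix.smul_mulVec, vecMulVec_mulVec,
    one_dotProduct]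
  ext m
  simp [mul_comm]

theorem centeringMatrix_mulVec_dotProduct (x y : n → K) :
    centeringMatrix n K *ᵥ x ⬝ᵥ centeringMatrix n K *ᵥ y
      = x ⬝ᵥ y - (Fintype.card n : K)⁻¹ * ((∑ m, x m) * ∑ m, y m) := by
  have hcard := inv_mul_mul_self (Fintype.card n : K)⁻¹
  rw [inv_inv] at hcard
  simp only [centeringMatrix_mulVec, dotProduct_sub, sub_dotProduct, smul_dotProduct,
    one_dotProduct, smul_eq_mul, dotProduct_smul, dotProduct_one, Pi.sub_apply, Pi.smul_apply,
    Pi.one_apply, mul_one, Finset.sum_sub_distrib, Finset.sum_const, Finset.card_univ,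
    nsmul_eq_mul]
  linear_combination ((∑ m, x m) * ∑ m, y m) * hcard

end Centering

theorem star_exp_neg_two_pi_I_mul_self (f t : ℝ) :
    star (Complex.exp (-(2 * π * Complex.I * f * t))) * Complex.exp (-(2 * π * Complex.I * f * t))
      = 1 := by
  rw [show -(2 * π * Complex.I * f * t) = ((-(2 * π * f * t) : ℝ) : ℂ) * Complex.I by
      push_cast; ring,
    Complex.star_def, Complex.conj_mul', Complex.norm_exp_ofReal_mul_I]
  norm_num

theorem trace_inv_mul_two_pi_I_smul_lie_diagonal {n : Type*} [Fintype n] [DecidableEq n]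
    {u : n → ℂ} (hu : ∀ m, star u m * u m = 1) {a b : ℝ} (hb : b ≠ 0)
    (hab : b + a * Fintype.card n ≠ 0) (f : ℝ) (g h : n → ℝ) :
    trace ((((a : ℝ) : ℂ) • vecMulVec u (star u) + ((b : ℝ) : ℂ) • 1)⁻¹ *
        ((2 * π * Complex.I * f * a) • ⁅vecMulVec u (star u), diagonal fun m => (g m : ℂ)⁆) *
        (((a : ℝ) : ℂ) • vecMulVec u (star u) + ((b : ℝ) : ℂ) • 1)⁻¹ *
        ((2 * π * Complex.I * f * a) • ⁅vecMulVec u (star u), diagonal fun m => (h m : ℂ)⁆))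
      = ((4 * π ^ 2 * f ^ 2 * (2 * a ^ 2 / (b * (b + a * Fintype.card n))) *
          (Fintype.card n * (g ⬝ᵥ h) - (∑ m, g m) * ∑ m, h m) : ℝ) : ℂ) := by
  have hbC : (b : ℂ) ≠ 0 := by exact_mod_cast hb
  have habC : (b : ℂ) + a * Fintype.card n ≠ 0 := by exact_mod_cast hab
  have hκ : (2 * π * Complex.I * f * a) * (2 * π * Complex.I * f * a) = -(4 * π ^ 2 * f ^ 2 * a ^ 2) := by
    linear_combination (4 * π ^ 2 * f ^ 2 * a ^ 2 : ℂ) * Complex.I_sq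
  rw [trace_inv_mul_smul_lie_diagonal hu hbC habC, hκ]
  simp only [dotProduct]
  push_cast
  field_simp
  ring

theorem half_integral_neg_ofReal_const_mul_sq (C a : ℝ) :
    (1 / 2 : ℂ) * ∫ f in (-a)..a, ((C * f ^ 2 : ℝ) : ℂ) = ((C * a ^ 3 / 3 : ℝ) : ℂ) := by
  rw [intervalIntegral.integral_ofReal, intervalIntegral.integral_const_mul, integral_pow]
  push_cast
  ring

theorem low_band_whittle_FI_rate_general
    (d M : ℕ) (hM : 2 ≤ M)
    (τ : Fin M → ℝ)
    (g : Fin d → Fin M → ℝ)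
    (P : Matrix (Fin M) (Fin M) ℝ)
    (hP : P = (1 : Matrix (Fin M) (Fin M) ℝ) - ((M : ℝ))⁻¹ • vecMulVec 1 1)
    (G : Fin d → Fin d → ℝ)
    (hG : ∀ i j, G i j = P.mulVec (g i) ⬝ᵥ P.mulVec (g j))
    (v : ℝ → Fin M → ℂ)
    (hv : ∀ f m, v f m = Complex.exp (-(2 * π * Complex.I * f * τ m)))
    (fL SL N0 lam : ℝ)
    (hfL : 0 < fL) (hSL : 0 < SL) (hN0 : 0 < N0)
    (hlam0 : 0 < lam) (hlamL : lam < SL + N0)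
    (BL : ℝ) (hBL : BL = 1 - lam / (SL + N0))
    (SwL : ℝ) (hSwL : SwL = BL ^ 2 * N0 + lam * BL)
    (γL : ℝ) (hγL : γL = SL * BL ^ 2 / SwL)
    (wL : ℝ) (hwL : wL = 2 * M * γL ^ 2 / (1 + M * γL))
    (D : Fin d → Matrix (Fin M) (Fin M) ℂ)
    (hD : ∀ i, D i = Matrix.diagonal fun m => (g i m : ℂ))
    (S : ℝ → Matrix (Fin M) (Fin M) ℂ)
    (S' : Fin d → ℝ → Matrix (Fin M) (Fin M) ℂ)
    (hSlow : ∀ f : ℝ, |f| ≤ fL →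
      S f = ((SL * BL ^ 2 : ℝ) : ℂ) • vecMulVec (v f) (star (v f))
        + ((SwL : ℝ) : ℂ) • (1 : Matrix (Fin M) (Fin M) ℂ))
    (hS'low : ∀ (i : Fin d) (f : ℝ), |f| ≤ fL →
      S' i f = (2 * π * Complex.I * f * (SL * BL ^ 2)) •
        (vecMulVec (v f) (star (v f)) * D i - D i * vecMulVec (v f) (star (v f)))) :
    ∀ i j : Fin d,
      (1 / 2 : ℂ) * ∫ f in (-fL)..fL,
          Matrix.trace ((S f)⁻¹ * S' i f * (S f)⁻¹ * S' j f)
        = (((4 * π ^ 2 / 3) * fL ^ 3 * wL * G i j : ℝ) : ℂ) := by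
  intro i j
  have hBL_pos : 0 < BL := by
    rw [hBL, sub_pos, div_lt_one (by linarith)]
    exact hlamL
  have hSwL_pos : 0 < SwL := by rw [hSwL]; positivity
  have hSwL_add_pos : 0 < SwL + SL * BL ^ 2 * M := by positivity
  have hwL' : wL = 2 * (SL * BL ^ 2) ^ 2 / (SwL * (SwL + SL * BL ^ 2 * M)) * M := by
    rw [hwL, hγL]
    field_simp
  have hMG : M * G i j = M * (g i ⬝ᵥ g j) - (∑ m, g i m) * ∑ m, g j m := by
    have hM0 : (M : ℝ) ≠ 0 := Nat.cast_ne_zero.2 (by omega)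
    have hPc : P = centeringMatrix (Fin M) ℝ := by rw [hP, centeringMatrix, Fintype.card_fin]
    rw [hG, hPc, centeringMatrix_mulVec_dotProduct, Fintype.card_fin]
    field_simp
  have hcongr : Set.EqOn (fun f => trace ((S f)⁻¹ * S' i f * (S f)⁻¹ * S' j f))
      (fun f : ℝ => ((4 * π ^ 2 * wL * G i j * f ^ 2 : ℝ) : ℂ)) (Set.uIcc (-fL) fL) := by
    intro f hf
    rw [Set.uIcc_of_le (by linarith)] at hf
    have hf' : |f| ≤ fL := abs_le.2 hf
    dsimp only
    have hu : ∀ m, star (v f) m * v f m = 1 := fun m => by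
      rw [Pi.star_apply, hv]
      exact star_exp_neg_two_pi_I_mul_self f (τ m)
    rw [hSlow f hf', hS'low i f hf', hS'low j f hf', hD, hD, ← Ring.lie_def, ← Ring.lie_def,
      show (SL : ℂ) * BL ^ 2 = ((SL * BL ^ 2 : ℝ) : ℂ) by push_cast; ring,
      trace_inv_mul_two_pi_I_smul_lie_diagonal hu hSwL_pos.ne'
        (by rw [Fintype.card_fin]; exact hSwL_add_pos.ne'), Fintype.card_fin, hwL']
    congr 1
    linear_combination (-8 * π ^ 2 * f ^ 2 * (SL * BL ^ 2) ^ 2 / (SwL * (SwL + SL * BL ^ 2 * M))) * hMG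
  rw [intervalIntegral.integral_congr hcongr, half_integral_neg_ofReal_const_mul_sq]
  congr 1
  ring

/-- **Intermediate-rate regime of Theorem 1**: under RD-optimal compression with
`S_H + N₀ ≤ λ < S_L + N₀` the high band is dropped, and the Fisher-information rate
comes only from the low band: `(1/2)∫_{−f_L}^{f_L} tr(S⁻¹S'_i S⁻¹S'_j) df
= (4π²/3) f_L³ w_L G_{ij}`. -/
theorem low_band_whittle_FI_rate
    (d M : ℕ) (hd : 1 ≤ d) (hM : 2 ≤ M)
    (p : EuclideanSpace ℝ (Fin d)) (ps : Fin M → EuclideanSpace ℝ (Fin d))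
    (hps : ∀ m, p ≠ ps m) (c : ℝ) (hc : 0 < c)
    (τ : Fin M → ℝ) (hτ : ∀ m, τ m = ‖p - ps m‖ / c)
    (g : Fin d → Fin M → ℝ)
    (hg : ∀ i m, g i m = (p i - ps m i) / (c * ‖p - ps m‖))
    (P : Matrix (Fin M) (Fin M) ℝ)
    (hP : P = (1 : Matrix (Fin M) (Fin M) ℝ) - ((M : ℝ))⁻¹ • vecMulVec 1 1)
    (G : Fin d → Fin d → ℝ)
    (hG : ∀ i j, G i j = P.mulVec (g i) ⬝ᵥ P.mulVec (g j))
    (v : ℝ → Fin M → ℂ)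
    (hv : ∀ f m, v f m = Complex.exp (-(2 * π * Complex.I * f * τ m)))
    (fL SL N0 lam : ℝ)
    (hfL : 0 < fL) (hSL : 0 < SL) (hN0 : 0 < N0)
    (hlam0 : 0 < lam) (hlamL : lam < SL + N0)
    (BL : ℝ) (hBL : BL = 1 - lam / (SL + N0))
    (SwL : ℝ) (hSwL : SwL = BL ^ 2 * N0 + lam * BL)
    (γL : ℝ) (hγL : γL = SL * BL ^ 2 / SwL)
    (wL : ℝ) (hwL : wL = 2 * M * γL ^ 2 / (1 + M * γL))
    (D : Fin d → Matrix (Fin M) (Fin M) ℂ)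
    (hD : ∀ i, D i = Matrix.diagonal fun m => (g i m : ℂ))
    (S : ℝ → Matrix (Fin M) (Fin M) ℂ)
    (S' : Fin d → ℝ → Matrix (Fin M) (Fin M) ℂ)
    (hSlow : ∀ f : ℝ, |f| ≤ fL →
      S f = ((SL * BL ^ 2 : ℝ) : ℂ) • vecMulVec (v f) (star (v f))
        + ((SwL : ℝ) : ℂ) • (1 : Matrix (Fin M) (Fin M) ℂ))
    (hS'low : ∀ (i : Fin d) (f : ℝ), |f| ≤ fL →
      S' i f = (2 * π * Complex.I * f * (SL * BL ^ 2)) •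
        (vecMulVec (v f) (star (v f)) * D i - D i * vecMulVec (v f) (star (v f)))) :
    ∀ i j : Fin d,
      (1 / 2 : ℂ) * ∫ f in (-fL)..fL,
          Matrix.trace ((S f)⁻¹ * S' i f * (S f)⁻¹ * S' j f)
        = (((4 * π ^ 2 / 3) * fL ^ 3 * wL * G i j : ℝ) : ℂ) :=
  low_band_whittle_FI_rate_general d M hM τ g P hP G hG v hv fL SL N0 lam hfL hSL hN0 hlam0 hlamL BL
    hBL SwL hSwL γL hγL wL hwL D hD S S' hSlow hS'low
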